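/- Chapman–Kolmogorov recursion for the empirical CDF: with R(s,m) = P(∀t∈[0,s]: g(t) < n·F̂_n(t) < h(t) and n·F̂_n(s) = m), for times t_i < t_{i+1} in [0,1), if g(t_{i+1}) < m < h(t_{i+1}) then R(t_{i+1}, m) = ∑_{ℓ: g(t_i) < ℓ ≤ m} R(t_i, ℓ)·P(Z_{ℓ,i} = m−ℓ), where Z_{ℓ,i} ~ Binomial(n−ℓ, (t_{i+1}−t_i)/(1−t_i)); and R(t_{i+1},m) = 0 otherwise. -/

import Mathlib

/-!
Split the sample according to the set `S` of points in `[0, s]` and the set `U` of points in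
`(s, t]`. On such a cell the band condition up to time `s` only involves the points of `S`, so
by independence the cell has probability `P(S-event) · (t - s)^|U| · (1 - t)^(n - |S| - |U|)`,
while `R(s, ℓ)` splits in the same way as `∑_{|S| = ℓ} P(S-event) · (1 - s)^(n - ℓ)`. Summing over
`U` and dividing out `(1 - s)^(n - ℓ)` leaves the binomial transition probability. Between
consecutive crossing times the band condition cannot fail in the open interval `(s, t)`, because
the count and both boundaries are monotone, so `R(t, m)` only adds the condition at `t` itself.
-/

open MeasureTheory ProbabilityTheory Set

section Count

variable {ι : Type*} [Fintype ι]

noncomputable def countLe (y : ι → ℝ) (u : ℝ) : ℕ :=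
  (Finset.univ.filter fun i => y i ≤ u).card

def InBand (g h : ℝ → ℝ) (r : ℝ) (y : ι → ℝ) : Prop :=
  ∀ u ∈ Icc 0 r, g u < countLe y u ∧ (countLe y u : ℝ) < h u

lemma countLe_mono (y : ι → ℝ) : Monotone (countLe y) := fun _ _ huv =>
  Finset.card_le_card <| Finset.monotone_filter_right _ fun _ _ hi => hi.trans huv

lemma countLe_eq_of_forall_notMem_Ioc (y : ι → ℝ) {u v : ℝ} (huv : u ≤ v)
    (hgap : ∀ i, y i ∉ Ioc u v) : countLe y v = countLe y u := by
  unfold countLe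
  congr 1
  ext i
  have := hgap i
  simp only [Finset.mem_filter, Finset.mem_univ, true_and, mem_Ioc, not_and, not_le] at this ⊢
  exact ⟨fun hv => not_lt.1 fun hu => (this hu).not_ge hv, fun hu => hu.trans huv⟩

lemma exists_rat_gt_countLe_eq (y : ι → ℝ) {u r : ℝ} (hur : u < r) :
    ∃ q : ℚ, u < q ∧ (q : ℝ) ≤ r ∧ countLe y q = countLe y u := by
  classical
  let F : Finset ℝ := insert r ((Finset.univ.filter fun i => u < y i).image y)
  have hF : u < F.min' (Finset.insert_nonempty _ _) := by
    simp only [Finset.lt_min'_iff, F, Finset.mem_insert, Finset.mem_image, Finset.mem_filter,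
      Finset.mem_univ, true_and]
    rintro _ (rfl | ⟨i, hi, rfl⟩) <;> assumption
  obtain ⟨q, huq, hqF⟩ := exists_rat_btwn hF
  have hle : ∀ x ∈ F, (q : ℝ) < x := fun x hx => hqF.trans_le (Finset.min'_le _ _ hx)
  refine ⟨q, huq, (hle r (Finset.mem_insert_self _ _)).le,
    countLe_eq_of_forall_notMem_Ioc y huq.le fun i hi => ?_⟩
  exact (hle (y i) (Finset.mem_insert_of_mem (Finset.mem_image_of_mem y
    (Finset.mem_filter.2 ⟨Finset.mem_univ i, hi.1⟩)))).not_ge hi.2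

lemma exists_le_countLe_eq (y : ι → ℝ) {u : ℝ} (hu : 0 ≤ u) :
    ∃ v ∈ Icc 0 u, (v = 0 ∨ ∃ i, v = y i) ∧ countLe y v = countLe y u := by
  classical
  let F : Finset ℝ := insert 0 ((Finset.univ.filter fun i => y i ∈ Icc 0 u).image y)
  have hmem : ∀ x ∈ F, (x = 0 ∨ ∃ i, x = y i) ∧ x ∈ Icc 0 u := by
    simp only [F, Finset.mem_insert, Finset.mem_image, Finset.mem_filter, Finset.mem_univ,
      true_and]
    rintro _ (rfl | ⟨i, hi, rfl⟩)
    · exact ⟨Or.inl rfl, le_rfl, hu⟩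
    · exact ⟨Or.inr ⟨i, rfl⟩, hi⟩
  let v := F.max' (Finset.insert_nonempty _ _)
  obtain ⟨hv, hv0, hvu⟩ := hmem v (Finset.max'_mem _ _)
  refine ⟨v, ⟨hv0, hvu⟩, hv, (countLe_eq_of_forall_notMem_Ioc y hvu fun i hi => ?_).symm⟩
  have : y i ∈ F := Finset.mem_insert_of_mem (Finset.mem_image_of_mem y
    (Finset.mem_filter.2 ⟨Finset.mem_univ i, hv0.trans hi.1.le, hi.2⟩))
  exact (Finset.le_max' _ _ this).not_gt hi.1

/-- The band condition needs checking only at rational times, at the endpoints and at the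
sample points: `countLe y` is a right-continuous step function jumping only at the `y i`. -/
lemma inBand_iff_countable {g h : ℝ → ℝ} (hg : Monotone g) (hh : Monotone h) {r : ℝ}
    (hr : 0 ≤ r) (y : ι → ℝ) :
    InBand g h r y ↔
      (∀ q : ℚ, (q : ℝ) ∈ Icc 0 r → g q < countLe y q) ∧ g r < countLe y r ∧
        (countLe y 0 : ℝ) < h 0 ∧ ∀ i, y i ∈ Icc 0 r → (countLe y (y i) : ℝ) < h (y i) := by
  refine ⟨fun H => ⟨fun q hq => (H q hq).1, (H r ⟨hr, le_rfl⟩).1, (H 0 ⟨le_rfl, hr⟩).2,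
    fun i hi => (H (y i) hi).2⟩, fun ⟨hq, hgr, hh0, hhy⟩ u hu => ⟨?_, ?_⟩⟩
  · rcases hu.2.eq_or_lt with rfl | hur
    · exact hgr
    obtain ⟨q, huq, hqr, hcount⟩ := exists_rat_gt_countLe_eq y hur
    calc g u ≤ g q := hg huq.le
      _ < countLe y q := hq q ⟨hu.1.trans huq.le, hqr⟩
      _ = countLe y u := by rw [hcount]
  · obtain ⟨v, hv, hv0 | ⟨i, rfl⟩, hcount⟩ := exists_le_countLe_eq y hu.1
    · subst hv0
      rw [← hcount]; exact hh0.trans_le (hh hu.1)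
    · rw [← hcount]; exact (hhy i ⟨hv.1, hv.2.trans hu.2⟩).trans_le (hh hv.2)

lemma measurable_countLe (u : ℝ) : Measurable fun y : ι → ℝ => countLe y u := by
  unfold countLe
  simp_rw [Finset.card_filter]
  exact Finset.measurable_sum _ fun i _ => Measurable.ite
    (measurableSet_le (measurable_pi_apply i) measurable_const) measurable_const measurable_const

lemma measurable_countLe_apply (i : ι) : Measurable fun y : ι → ℝ => countLe y (y i) := by
  unfold countLe
  simp_rw [Finset.card_filter]
  exact Finset.measurable_sum _ fun j _ => Measurable.ite
    (measurableSet_le (measurable_pi_apply j) (measurable_pi_apply i)) measurable_const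
    measurable_const

lemma measurableSet_inBand {g h : ℝ → ℝ} (hg : Monotone g) (hh : Monotone h) {r : ℝ}
    (hr : 0 ≤ r) : MeasurableSet {y : ι → ℝ | InBand g h r y} := by
  simp_rw [inBand_iff_countable hg hh hr, ofPred_and, ofPred_forall]
  have hcast (u : ℝ) : Measurable fun y : ι → ℝ => (countLe y u : ℝ) :=
    measurable_from_top.comp (measurable_countLe u)
  refine .inter (.iInter fun q => ?_) (.inter ?_ (.inter ?_ (.iInter fun i => ?_)))
  · by_cases hq : (q : ℝ) ∈ Icc 0 r
    · simpa [hq] using measurableSet_lt measurable_const (hcast q)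
    · simp [hq]
  · exact measurableSet_lt measurable_const (hcast r)
  · exact measurableSet_lt (hcast 0) measurable_const
  · have hyi : MeasurableSet {y : ι → ℝ | y i ∈ Icc 0 r} :=
      measurableSet_Icc.preimage (measurable_pi_apply i)
    have hlt : MeasurableSet {y : ι → ℝ | (countLe y (y i) : ℝ) < h (y i)} :=
      measurableSet_lt (measurable_from_top.comp (measurable_countLe_apply i))
        (hh.measurable.comp (measurable_pi_apply i))
    simpa only [imp_iff_not_or, ofPred_or, ← compl_ofPred] using hyi.compl.union hlt

lemma measurableSet_inBand_and_le {g h : ℝ → ℝ} (hg : Monotone g) (hh : Monotone h) {s : ℝ}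
    (hs : 0 ≤ s) : MeasurableSet {y : ι → ℝ | InBand g h s y ∧ ∀ i, y i ≤ s} := by
  have hle : MeasurableSet {y : ι → ℝ | ∀ i, y i ≤ s} := by
    rw [ofPred_forall]
    exact .iInter fun i => measurableSet_le (measurable_pi_apply i) measurable_const
  exact (measurableSet_inBand hg hh hs).inter hle

lemma countLe_subtype (y : ι → ℝ) (S : Finset ι) {u : ℝ} (hS : ∀ i, y i ≤ u → i ∈ S) :
    countLe (fun i : S => y i) u = countLe y u := by
  refine Finset.card_bij (fun i _ => i.1) (fun i hi => by simpa using hi)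
    (fun _ _ _ _ => Subtype.ext) fun i hi => ?_
  have hi : y i ≤ u := by simpa using hi
  exact ⟨⟨i, hS i hi⟩, by simpa using hi, rfl⟩

lemma inBand_subtype_iff {g h : ℝ → ℝ} {s : ℝ} (y : ι → ℝ) (S : Finset ι)
    (hS : ∀ i, y i ≤ s → i ∈ S) : InBand g h s (fun i : S => y i) ↔ InBand g h s y := by
  refine forall₂_congr fun u hu => ?_
  rw [countLe_subtype y S fun i hi => hS i (hi.trans hu.2)]

lemma countLe_eq_add_card_Ioc (y : ι → ℝ) {s t : ℝ} (hst : s ≤ t) :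
    countLe y t = countLe y s + (Finset.univ.filter fun i => y i ∈ Ioc s t).card := by
  classical
  unfold countLe
  rw [← Finset.card_union_of_disjoint (Finset.disjoint_filter.2 fun i _ hs ht => ht.1.not_ge hs),
    ← Finset.filter_or]
  congr 1
  ext i
  simp only [Finset.mem_filter, Finset.mem_univ, true_and, mem_Ioc]
  constructor
  · intro hit
    exact (le_or_gt (y i) s).imp_right fun hsi => ⟨hsi, hit⟩
  · rintro (his | ⟨-, hit⟩)
    exacts [his.trans hst, hit]

lemma inBand_iff_of_noCrossing {g h : ℝ → ℝ} {s t : ℝ} (hs : 0 ≤ s) (hst : s ≤ t)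
    (hgno : ∀ u, s < u → u < t → ∀ k : ℕ, g s < k → g u < k)
    (hhno : ∀ u, s < u → u < t → ∀ k : ℕ, (k : ℝ) < h t → (k : ℝ) < h u)
    {y : ι → ℝ} (hgt : g t < countLe y t) (hht : (countLe y t : ℝ) < h t) :
    InBand g h t y ↔ InBand g h s y := by
  refine ⟨fun H u hu => H u ⟨hu.1, hu.2.trans hst⟩, fun H u hu => ?_⟩
  rcases le_or_gt u s with hus | hsu
  · exact H u ⟨hu.1, hus⟩
  rcases hu.2.eq_or_lt with rfl | hut
  · exact ⟨hgt, hht⟩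
  have hgs : g s < countLe y u :=
    (H s ⟨hs, le_rfl⟩).1.trans_le (by exact_mod_cast countLe_mono y hsu.le)
  have hut' : (countLe y u : ℝ) ≤ countLe y t := by exact_mod_cast countLe_mono y hut.le
  exact ⟨hgno u hsu hut _ hgs, hhno u hsu hut _ (hut'.trans_lt hht)⟩

end Count

lemma pow_mul_binomial_rescale {s : ℝ} (hs : s < 1) (t : ℝ) (N a : ℕ) :
    (1 - s) ^ N * (N.choose a * ((t - s) / (1 - s)) ^ a * (1 - (t - s) / (1 - s)) ^ (N - a)) =
      N.choose a * (t - s) ^ a * (1 - t) ^ (N - a) := by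
  rcases le_or_gt a N with haN | hNa
  · obtain ⟨k, rfl⟩ := Nat.exists_eq_add_of_le haN
    have hs' : 1 - s ≠ 0 := (sub_pos.2 hs).ne'
    rw [Nat.add_sub_cancel_left, one_sub_div hs', div_pow, div_pow, pow_add]
    field_simp
    ring
  · simp [Nat.choose_eq_zero_of_lt hNa]

section Fibers

variable {Ω ι : Type*} {X : ι → Ω → ℝ} {g h : ℝ → ℝ} {s t : ℝ}

def lowBandEvent (X : ι → Ω → ℝ) (g h : ℝ → ℝ) (s : ℝ) (S : Finset ι) : Set Ω :=
  (fun ω (i : S) => X i ω) ⁻¹' {y | InBand g h s y ∧ ∀ i, y i ≤ s}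

variable [Fintype ι] [DecidableEq ι]

def bandFiber (X : ι → Ω → ℝ) (g h : ℝ → ℝ) (s t : ℝ) (S U : Finset ι) : Set Ω :=
  {ω | InBand g h s (X · ω) ∧ Finset.univ.filter (X · ω ≤ s) = S ∧
    Finset.univ.filter (X · ω ∈ Ioc s t) = U}

lemma bandFiber_eq_lowBandEvent_inter (hst : s ≤ t) {S U : Finset ι} (hU : U ⊆ Sᶜ) :
    bandFiber X g h s t S U = lowBandEvent X g h s S ∩
      ⋂ i ∈ Sᶜ, X i ⁻¹' U.piecewise (fun _ => Ioc s t) (fun _ => Ioi t) i := by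
  ext ω
  simp only [bandFiber, lowBandEvent, mem_ofPred_eq, mem_inter_iff, mem_preimage, mem_iInter,
    Finset.mem_compl, Finset.ext_iff, Finset.mem_filter, Finset.mem_univ, true_and]
  constructor
  · rintro ⟨hband, hS, hU'⟩
    refine ⟨⟨(inBand_subtype_iff _ S fun i => (hS i).1).2 hband, fun i => (hS i).2 i.2⟩,
      fun i hiS => ?_⟩
    by_cases hiU : i ∈ U
    · rw [Finset.piecewise_eq_of_mem _ _ _ hiU]
      exact (hU' i).2 hiU
    · rw [Finset.piecewise_eq_of_notMem _ _ _ hiU]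
      have hsi : s < X i ω := not_le.1 fun h => hiS ((hS i).1 h)
      exact not_le.1 fun h => hiU ((hU' i).1 ⟨hsi, h⟩)
  · rintro ⟨⟨hband, hle⟩, hrest⟩
    have hgt (i) (hiS : i ∉ S) : s < X i ω := by
      have := hrest i hiS
      by_cases hiU : i ∈ U
      · rw [Finset.piecewise_eq_of_mem _ _ _ hiU] at this; exact this.1
      · rw [Finset.piecewise_eq_of_notMem _ _ _ hiU] at this; exact hst.trans_lt this
    have hS (i) : X i ω ≤ s ↔ i ∈ S :=
      ⟨fun h => by_contra fun hiS => (hgt i hiS).not_ge h, fun hiS => hle ⟨i, hiS⟩⟩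
    refine ⟨(inBand_subtype_iff _ S fun i => (hS i).1).1 hband, hS, fun i => ?_⟩
    by_cases hiU : i ∈ U
    · have := hrest i (Finset.mem_compl.1 (hU hiU))
      rw [Finset.piecewise_eq_of_mem _ _ _ hiU] at this
      exact iff_of_true this hiU
    · refine iff_of_false (fun hi => ?_) hiU
      by_cases hiS : i ∈ S
      · exact hi.1.not_ge ((hS i).2 hiS)
      · have := hrest i hiS
        rw [Finset.piecewise_eq_of_notMem _ _ _ hiU] at this
        exact hi.2.not_gt this

lemma inBand_countLe_countLe_eq_biUnion (hst : s ≤ t) {ℓ m : ℕ} (hℓm : ℓ ≤ m) :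
    {ω | InBand g h s (X · ω) ∧ countLe (X · ω) s = ℓ ∧ countLe (X · ω) t = m} =
      ⋃ S ∈ Finset.powersetCard ℓ Finset.univ, ⋃ U ∈ Finset.powersetCard (m - ℓ) Sᶜ,
        bandFiber X g h s t S U := by
  ext ω
  have hcount := countLe_eq_add_card_Ioc (X · ω) hst
  simp only [mem_iUnion, Finset.mem_powersetCard, bandFiber, mem_ofPred_eq, exists_prop,
    Finset.subset_univ, true_and]
  constructor
  · rintro ⟨hband, rfl, rfl⟩
    refine ⟨_, rfl, _, ⟨fun i hi => ?_, by simp only [countLe] at hcount ⊢; omega⟩,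
      hband, rfl, rfl⟩
    simp only [Finset.mem_compl, Finset.mem_filter, Finset.mem_univ, true_and] at hi ⊢
    exact hi.1.not_ge
  · rintro ⟨_, rfl, _, ⟨-, hcard⟩, hband, rfl, rfl⟩
    exact ⟨hband, rfl, by simp only [countLe] at hcount ⊢; omega⟩

end Fibers

section Measure

variable {Ω ι : Type*} [MeasurableSpace Ω] {μ : Measure Ω} {X : ι → Ω → ℝ} {g h : ℝ → ℝ}
  {s t : ℝ}

lemma measure_preimage_Ioc_of_map_eq_uniform {Y : Ω → ℝ} (hY : Measurable Y)
    (hunif : μ.map Y = volume.restrict (Icc 0 1)) {a b : ℝ} (ha : 0 ≤ a) (hb : b ≤ 1) :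
    μ (Y ⁻¹' Ioc a b) = ENNReal.ofReal (b - a) := by
  rw [← Measure.map_apply hY measurableSet_Ioc, hunif, Measure.restrict_apply measurableSet_Ioc,
    inter_eq_self_of_subset_left (Ioc_subset_Icc_self.trans (Icc_subset_Icc ha hb)),
    Real.volume_Ioc]

lemma measure_preimage_Ioi_of_map_eq_uniform {Y : Ω → ℝ} (hY : Measurable Y)
    (hunif : μ.map Y = volume.restrict (Icc 0 1)) {a : ℝ} (ha : 0 ≤ a) :
    μ (Y ⁻¹' Ioi a) = ENNReal.ofReal (1 - a) := by
  have : Ioi a ∩ Icc 0 1 = Ioc a 1 := by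
    ext x
    simp only [mem_inter_iff, mem_Ioi, mem_Icc, mem_Ioc]
    exact ⟨fun hx => ⟨hx.1, hx.2.2⟩, fun hx => ⟨hx.1, ha.trans hx.1.le, hx.2⟩⟩
  rw [← Measure.map_apply hY measurableSet_Ioi, hunif, Measure.restrict_apply measurableSet_Ioi,
    this, Real.volume_Ioc]

lemma measurableSet_lowBandEvent (hX : ∀ i, Measurable (X i)) (hg : Monotone g)
    (hh : Monotone h) (hs : 0 ≤ s) (S : Finset ι) :
    MeasurableSet (lowBandEvent X g h s S) :=
  measurableSet_preimage (measurable_pi_lambda _ fun i : S => hX i)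
    (measurableSet_inBand_and_le hg hh hs)

lemma measurableSet_piecewise_Ioc_Ioi [DecidableEq ι] (U : Finset ι) (i : ι) :
    MeasurableSet (U.piecewise (fun _ => Ioc s t) (fun _ => Ioi t) i) := by
  unfold Finset.piecewise
  split_ifs
  exacts [measurableSet_Ioc, measurableSet_Ioi]

variable [Fintype ι]

lemma measurableSet_inBand_countLe_countLe (hX : ∀ i, Measurable (X i)) (hg : Monotone g)
    (hh : Monotone h) (hs : 0 ≤ s) (ℓ m : ℕ) :
    MeasurableSet {ω | InBand g h s (X · ω) ∧ countLe (X · ω) s = ℓ ∧ countLe (X · ω) t = m} :=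
  measurableSet_preimage (measurable_pi_lambda _ hX) ((measurableSet_inBand hg hh hs).inter
    ((measurable_countLe s (measurableSet_singleton ℓ)).inter
      (measurable_countLe t (measurableSet_singleton m))))

lemma measure_inBand_countLe_eq_sum (hX : ∀ i, Measurable (X i)) (hg : Monotone g)
    (hh : Monotone h) (hs : 0 ≤ s) (hst : s ≤ t) (m : ℕ) :
    μ {ω | InBand g h s (X · ω) ∧ countLe (X · ω) t = m} = ∑ ℓ ∈ Finset.range (m + 1),
      μ {ω | InBand g h s (X · ω) ∧ countLe (X · ω) s = ℓ ∧ countLe (X · ω) t = m} := by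
  rw [← measure_biUnion_finset (fun ℓ₁ _ ℓ₂ _ hne => disjoint_left.2 fun ω h₁ h₂ =>
    hne (h₁.2.1.symm.trans h₂.2.1))
    fun ℓ _ => measurableSet_inBand_countLe_countLe hX hg hh hs ℓ m]
  congr 1
  ext ω
  simp only [mem_ofPred_eq, mem_iUnion, Finset.mem_range, exists_prop, Nat.lt_succ_iff]
  refine ⟨fun ⟨hband, hm⟩ => ⟨_, hm ▸ countLe_mono _ hst, hband, rfl, hm⟩,
    fun ⟨_, _, hband, _, hm⟩ => ⟨hband, hm⟩⟩

variable [DecidableEq ι]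

lemma measure_lowBandEvent_inter (hX : ∀ i, Measurable (X i)) (hind : iIndepFun X μ)
    (hg : Monotone g) (hh : Monotone h) (hs : 0 ≤ s) (S : Finset ι) {A : ι → Set ℝ}
    (hA : ∀ i, MeasurableSet (A i)) :
    μ (lowBandEvent X g h s S ∩ ⋂ i ∈ Sᶜ, X i ⁻¹' A i) =
      μ (lowBandEvent X g h s S) * ∏ i ∈ Sᶜ, μ (X i ⁻¹' A i) := by
  have hcompl : ⋂ i ∈ Sᶜ, X i ⁻¹' A i =
      (fun ω (i : ↥Sᶜ) => X i ω) ⁻¹' univ.pi fun i => A i := by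
    ext ω
    simp only [mem_iInter, mem_preimage, mem_pi, mem_univ, true_implies]
    exact ⟨fun H i => H i i.2, fun H i hi => H ⟨i, hi⟩⟩
  rw [hcompl, lowBandEvent, (hind.indepFun_finset S Sᶜ disjoint_compl_right
    hX).measure_inter_preimage_eq_mul _ _ (measurableSet_inBand_and_le hg hh hs)
    (.univ_pi fun i => hA i), ← hcompl, hind.measure_inter_preimage_eq_mul Sᶜ fun i _ => hA i]

lemma measurableSet_bandFiber (hX : ∀ i, Measurable (X i)) (hg : Monotone g) (hh : Monotone h)
    (hs : 0 ≤ s) (hst : s ≤ t) {S U : Finset ι} (hU : U ⊆ Sᶜ) :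
    MeasurableSet (bandFiber X g h s t S U) := by
  rw [bandFiber_eq_lowBandEvent_inter hst hU]
  exact (measurableSet_lowBandEvent hX hg hh hs S).inter
    (.biInter (to_countable _) fun i _ => hX i (measurableSet_piecewise_Ioc_Ioi U i))

lemma measure_bandFiber (hX : ∀ i, Measurable (X i)) (hind : iIndepFun X μ)
    (hunif : ∀ i, μ.map (X i) = volume.restrict (Icc 0 1)) (hg : Monotone g) (hh : Monotone h)
    (hs : 0 ≤ s) (hst : s ≤ t) (ht : t ≤ 1) {S U : Finset ι} (hU : U ⊆ Sᶜ) :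
    μ (bandFiber X g h s t S U) = μ (lowBandEvent X g h s S) *
      (ENNReal.ofReal (t - s) ^ U.card * ENNReal.ofReal (1 - t) ^ (Sᶜ \ U).card) := by
  rw [bandFiber_eq_lowBandEvent_inter hst hU, measure_lowBandEvent_inter hX hind hg hh hs S
    (measurableSet_piecewise_Ioc_Ioi U), ← Finset.prod_sdiff hU, mul_comm (_ ^ _)]
  congr 2
  · refine Finset.prod_eq_pow_card fun i hi => ?_
    rw [Finset.piecewise_eq_of_notMem _ _ _ (Finset.mem_sdiff.1 hi).2]
    exact measure_preimage_Ioi_of_map_eq_uniform (hX i) (hunif i) (hs.trans hst)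
  · refine Finset.prod_eq_pow_card fun i hi => ?_
    rw [Finset.piecewise_eq_of_mem _ _ _ hi]
    exact measure_preimage_Ioc_of_map_eq_uniform (hX i) (hunif i) hs ht

lemma measure_inBand_countLe_countLe (hX : ∀ i, Measurable (X i)) (hind : iIndepFun X μ)
    (hunif : ∀ i, μ.map (X i) = volume.restrict (Icc 0 1)) (hg : Monotone g) (hh : Monotone h)
    (hs : 0 ≤ s) (hst : s ≤ t) (ht : t ≤ 1) {ℓ m : ℕ} (hℓm : ℓ ≤ m) :
    μ {ω | InBand g h s (X · ω) ∧ countLe (X · ω) s = ℓ ∧ countLe (X · ω) t = m} =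
      (∑ S ∈ Finset.powersetCard ℓ Finset.univ, μ (lowBandEvent X g h s S)) *
        ENNReal.ofReal ((Fintype.card ι - ℓ).choose (m - ℓ) * (t - s) ^ (m - ℓ) *
          (1 - t) ^ (Fintype.card ι - ℓ - (m - ℓ))) := by
  have hfiber (S : Finset ι) : (Finset.powersetCard (m - ℓ) Sᶜ : Set (Finset ι)).PairwiseDisjoint
      (bandFiber X g h s t S) := fun U₁ _ U₂ _ hne =>
    disjoint_left.2 fun ω h₁ h₂ => hne (h₁.2.2.symm.trans h₂.2.2)
  have hfibers :
      (↑(Finset.powersetCard ℓ (Finset.univ : Finset ι)) : Set (Finset ι)).PairwiseDisjoint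
        fun S => ⋃ U ∈ Finset.powersetCard (m - ℓ) Sᶜ, bandFiber X g h s t S U := by
    refine fun S₁ _ S₂ _ hne => disjoint_left.2 fun ω h₁ h₂ => hne ?_
    simp only [mem_iUnion] at h₁ h₂
    obtain ⟨_, _, h₁⟩ := h₁
    obtain ⟨_, _, h₂⟩ := h₂
    exact h₁.2.1.symm.trans h₂.2.1
  have hmeas (S : Finset ι) {U} (hU : U ∈ Finset.powersetCard (m - ℓ) Sᶜ) :=
    measurableSet_bandFiber hX hg hh hs hst (Finset.mem_powersetCard.1 hU).1
  rw [inBand_countLe_countLe_eq_biUnion hst hℓm, measure_biUnion_finset hfibers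
    fun S _ => .biUnion (to_countable _) fun U hU => hmeas S hU, Finset.sum_mul]
  refine Finset.sum_congr rfl fun S hS => ?_
  have hcardS : Sᶜ.card = Fintype.card ι - ℓ := by
    rw [Finset.card_compl, (Finset.mem_powersetCard.1 hS).2]
  rw [measure_biUnion_finset (hfiber S) fun U hU => hmeas S hU]
  calc ∑ U ∈ Finset.powersetCard (m - ℓ) Sᶜ, μ (bandFiber X g h s t S U)
      = ∑ U ∈ Finset.powersetCard (m - ℓ) Sᶜ, μ (lowBandEvent X g h s S) *
          (ENNReal.ofReal (t - s) ^ (m - ℓ) *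
            ENNReal.ofReal (1 - t) ^ (Fintype.card ι - ℓ - (m - ℓ))) := by
        refine Finset.sum_congr rfl fun U hU => ?_
        obtain ⟨hUS, hcardU⟩ := Finset.mem_powersetCard.1 hU
        rw [measure_bandFiber hX hind hunif hg hh hs hst ht hUS, Finset.card_sdiff_of_subset hUS,
          hcardS, hcardU]
    _ = _ := by
        rw [Finset.sum_const, Finset.card_powersetCard, hcardS, nsmul_eq_mul,
          ENNReal.ofReal_mul (by positivity), ENNReal.ofReal_mul (by positivity),
          ENNReal.ofReal_natCast, ENNReal.ofReal_pow (sub_nonneg.2 hst),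
          ENNReal.ofReal_pow (sub_nonneg.2 ht)]
        ring

lemma measure_inBand_countLe (hX : ∀ i, Measurable (X i)) (hind : iIndepFun X μ)
    (hunif : ∀ i, μ.map (X i) = volume.restrict (Icc 0 1)) (hg : Monotone g) (hh : Monotone h)
    (hs : 0 ≤ s) (hs1 : s ≤ 1) (ℓ : ℕ) :
    μ {ω | InBand g h s (X · ω) ∧ countLe (X · ω) s = ℓ} =
      (∑ S ∈ Finset.powersetCard ℓ Finset.univ, μ (lowBandEvent X g h s S)) *
        ENNReal.ofReal ((1 - s) ^ (Fintype.card ι - ℓ)) := by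
  simpa using measure_inBand_countLe_countLe hX hind hunif hg hh hs le_rfl hs1 le_rfl (m := ℓ)

theorem measure_inBand_countLe_countLe_eq_mul (hX : ∀ i, Measurable (X i))
    (hind : iIndepFun X μ) (hunif : ∀ i, μ.map (X i) = volume.restrict (Icc 0 1))
    (hg : Monotone g) (hh : Monotone h) (hs : 0 ≤ s) (hst : s < t) (ht : t ≤ 1) {ℓ m : ℕ}
    (hℓm : ℓ ≤ m) :
    μ {ω | InBand g h s (X · ω) ∧ countLe (X · ω) s = ℓ ∧ countLe (X · ω) t = m} =
      μ {ω | InBand g h s (X · ω) ∧ countLe (X · ω) s = ℓ} *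
        ENNReal.ofReal ((Fintype.card ι - ℓ).choose (m - ℓ) * ((t - s) / (1 - s)) ^ (m - ℓ) *
          (1 - (t - s) / (1 - s)) ^ (Fintype.card ι - ℓ - (m - ℓ))) := by
  have hs1 : s < 1 := hst.trans_le ht
  rw [measure_inBand_countLe_countLe hX hind hunif hg hh hs hst.le ht hℓm,
    measure_inBand_countLe hX hind hunif hg hh hs hs1.le, ← pow_mul_binomial_rescale hs1,
    ENNReal.ofReal_mul (pow_nonneg (sub_nonneg.2 hs1.le) _), ← mul_assoc]

end Measure

theorem poisson_bcp_stmt14_general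
    {Ω : Type*} [MeasureSpace Ω]
    (n : ℕ)
    (X : Fin n → Ω → ℝ) (hXmeas : ∀ i, Measurable (X i))
    (hXindep : iIndepFun X ℙ)
    (hXunif : ∀ i, Measure.map (X i) ℙ = (volume : Measure ℝ).restrict (Icc 0 1))
    (g h : ℝ → ℝ) (hg : Monotone g) (hh : Monotone h)
    (R : ℝ → ℕ → ENNReal)
    (hR : ∀ s m, R s m = ℙ {ω | (∀ u ∈ Icc (0:ℝ) s,
        g u < ((Finset.univ.filter fun i => X i ω ≤ u).card : ℝ) ∧
        ((Finset.univ.filter fun i => X i ω ≤ u).card : ℝ) < h u) ∧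
        (Finset.univ.filter fun i => X i ω ≤ s).card = m})
    (s t : ℝ) (hs : 0 ≤ s) (hst : s < t) (ht : t < 1)
    -- no integer crossing of g strictly between s and t
    (hgno : ∀ u, s < u → u < t → ∀ k : ℕ, g s < k → g u < k)
    -- no integer crossing of h strictly between s and t
    (hhno : ∀ u, s < u → u < t → ∀ k : ℕ, (k : ℝ) < h t → (k : ℝ) < h u)
    (m : ℕ) :
    (g t < m → (m : ℝ) < h t →
      R t m = ∑ ℓ ∈ Finset.range (m + 1),
        (if g s < (ℓ : ℝ) then
          R s ℓ * ENNReal.ofReal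
            (((n - ℓ).choose (m - ℓ) : ℝ) * ((t - s) / (1 - s)) ^ (m - ℓ) *
              (1 - (t - s) / (1 - s)) ^ ((n - ℓ) - (m - ℓ)))
         else 0)) ∧
    (¬ (g t < m ∧ (m : ℝ) < h t) → R t m = 0) := by
  have hRband (r : ℝ) (k : ℕ) : R r k = ℙ {ω | InBand g h r (X · ω) ∧ countLe (X · ω) r = k} :=
    hR r k
  refine ⟨fun hgt hht => ?_, fun hout => ?_⟩
  · have hstep : {ω | InBand g h t (X · ω) ∧ countLe (X · ω) t = m} =
        {ω | InBand g h s (X · ω) ∧ countLe (X · ω) t = m} := by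
      ext ω
      exact and_congr_left fun hm =>
        inBand_iff_of_noCrossing hs hst.le hgno hhno (hm ▸ hgt) (hm ▸ hht)
    rw [hRband, hstep, measure_inBand_countLe_eq_sum hXmeas hg hh hs hst.le]
    refine Finset.sum_congr rfl fun ℓ hℓ => ?_
    split_ifs with hgℓ
    · rw [measure_inBand_countLe_countLe_eq_mul hXmeas hXindep hXunif hg hh hs hst ht.le
        (Nat.lt_succ_iff.1 (Finset.mem_range.1 hℓ)), hRband, Fintype.card_fin]
    · refine measure_mono_null (fun ω ⟨hband, hℓ, _⟩ => hgℓ ?_) measure_empty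
      exact hℓ ▸ (hband s ⟨hs, le_rfl⟩).1
  · rw [hRband]
    refine measure_mono_null (fun ω ⟨hband, hm⟩ => hout ?_) measure_empty
    exact hm ▸ hband t ⟨hs.trans hst.le, le_rfl⟩

/-- Chapman–Kolmogorov recursion for the non-crossing probabilities
`R(s,m)` of the scaled empirical CDF `n·F̂ₙ`, between consecutive integer-crossing
times `s < t` in `[0,1)`, with binomial transition probabilities
`Z_{ℓ} ~ Binomial(n−ℓ, (t−s)/(1−s))`. -/
theorem poisson_bcp_stmt14
    {Ω : Type*} [MeasureSpace Ω] [IsProbabilityMeasure (ℙ : Measure Ω)]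
    (n : ℕ) (hn : 0 < n)
    (X : Fin n → Ω → ℝ) (hXmeas : ∀ i, Measurable (X i))
    (hXindep : iIndepFun X ℙ)
    (hXunif : ∀ i, Measure.map (X i) ℙ = (volume : Measure ℝ).restrict (Icc 0 1))
    (g h : ℝ → ℝ) (hg : Monotone g) (hh : Monotone h)
    (hgh : ∀ t, g t < h t) (hg0 : g 0 < 0) (hh0 : 0 < h 0)
    (R : ℝ → ℕ → ENNReal)
    (hR : ∀ s m, R s m = ℙ {ω | (∀ u ∈ Icc (0:ℝ) s,
        g u < ((Finset.univ.filter fun i => X i ω ≤ u).card : ℝ) ∧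
        ((Finset.univ.filter fun i => X i ω ≤ u).card : ℝ) < h u) ∧
        (Finset.univ.filter fun i => X i ω ≤ s).card = m})
    (s t : ℝ) (hs : 0 ≤ s) (hst : s < t) (ht : t < 1)
    -- no integer crossing of g strictly between s and t
    (hgno : ∀ u, s < u → u < t → ∀ k : ℕ, g s < k → g u < k)
    -- no integer crossing of h strictly between s and t
    (hhno : ∀ u, s < u → u < t → ∀ k : ℕ, (k : ℝ) < h t → (k : ℝ) < h u)
    (m : ℕ) :
    (g t < m → (m : ℝ) < h t →
      R t m = ∑ ℓ ∈ Finset.range (m + 1),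
        (if g s < (ℓ : ℝ) then
          R s ℓ * ENNReal.ofReal
            (((n - ℓ).choose (m - ℓ) : ℝ) * ((t - s) / (1 - s)) ^ (m - ℓ) *
              (1 - (t - s) / (1 - s)) ^ ((n - ℓ) - (m - ℓ)))
         else 0)) ∧
    (¬ (g t < m ∧ (m : ℝ) < h t) → R t m = 0) :=
  poisson_bcp_stmt14_general n X hXmeas hXindep hXunif g h hg hh R hR s t hs hst ht hgno hhno m
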